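/- Let Y be a real Banach space and let X = X₁ ⊕_a X₂ be the absolute sum of real Banach spaces X₁ and X₂ with respect to an absolute norm N which is of type 1 or of type ∞ (so X₁ is an absolute summand of X of type 1 or ∞). If the pair (X₁ ⊕_a X₂, Y) has the Bishop–Phelps–Bollobás property, then the pair (X₁, Y) has the Bishop–Phelps–Bollobás property. -/

import Mathlib

open Filter Topology

/-- `N` is an absolute norm on `ℝ²`: a norm with `N(1,0)=N(0,1)=1` and
`N(s,t)=N(|s|,|t|)`. -/
structure IsAbsoluteNorm (N : ℝ → ℝ → ℝ) : Prop where
  nonneg : ∀ s t : ℝ, 0 ≤ N s t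
  eq_zero_iff : ∀ s t : ℝ, N s t = 0 ↔ s = 0 ∧ t = 0
  triangle : ∀ s₁ t₁ s₂ t₂ : ℝ, N (s₁ + s₂) (t₁ + t₂) ≤ N s₁ t₁ + N s₂ t₂
  smul : ∀ c s t : ℝ, N (c * s) (c * t) = |c| * N s t
  one_zero : N 1 0 = 1
  zero_one : N 0 1 = 1
  abs_eq : ∀ s t : ℝ, N s t = N |s| |t|

/-- An absolute norm is of type 1 if `|x| + K|y| ≤ N(x,y)` for some `K > 0`. -/
def AbsNormTypeOne (N : ℝ → ℝ → ℝ) : Prop :=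
  ∃ K : ℝ, 0 < K ∧ ∀ x y : ℝ, |x| + K * |y| ≤ N x y

/-- An absolute norm is of type ∞ if `N(1,b₀) = 1` for some `b₀ > 0`. -/
def AbsNormTypeInfty (N : ℝ → ℝ → ℝ) : Prop :=
  ∃ b₀ : ℝ, 0 < b₀ ∧ N 1 b₀ = 1

/-- The pair `(X, Y)` has the Bishop–Phelps–Bollobás property. -/
def HasBPBp (X Y : Type*) [NormedAddCommGroup X] [NormedSpace ℝ X]
    [NormedAddCommGroup Y] [NormedSpace ℝ Y] : Prop :=
  ∀ ε : ℝ, 0 < ε → ∃ η : ℝ, 0 < η ∧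
    ∀ (T : X →L[ℝ] Y) (x₀ : X), ‖T‖ = 1 → ‖x₀‖ = 1 → 1 - η < ‖T x₀‖ →
      ∃ (S : X →L[ℝ] Y) (x₁ : X),
        ‖S‖ = 1 ∧ ‖x₁‖ = 1 ∧ ‖S x₁‖ = 1 ∧ ‖x₁ - x₀‖ < ε ∧ ‖S - T‖ < ε

/-! Apply the BPBp of `X` to `T ∘ P₁` at `(x₀, 0)`, getting `S` attaining its norm at some
`w = (u₁, u₂)` close to `(x₀, 0)`, so `u₂` is small and `‖u₁‖` is close to one. With `g` a norming
functional of `u₁`, the map `A x = (x, g x / ‖u₁‖ • u₂)` sends `u₁` to `w` and, by monotonicity and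
homogeneity of `N` together with `N ‖u₁‖ ‖u₂‖ = 1`, satisfies `‖u₁‖ ‖A x‖ ≤ ‖x‖`. Hence
`‖u₁‖ • S ∘ A` has norm one, attains it at `u₁ / ‖u₁‖`, and differs from `T` by at most
`|‖u₁‖ - 1| + ‖u₂‖ + ‖S - T ∘ P₁‖`. -/

lemma norm_inv_norm_smul_sub_self {E : Type*} [NormedAddCommGroup E] [NormedSpace ℝ E] {u : E}
    (hu : u ≠ 0) : ‖‖u‖⁻¹ • u - u‖ = |‖u‖ - 1| := by
  have hu' : ‖u‖ ≠ 0 := norm_ne_zero_iff.2 hu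
  rw [show ‖u‖⁻¹ • u - u = (‖u‖⁻¹ - 1) • u by rw [sub_smul, one_smul], norm_smul,
    Real.norm_eq_abs, ← abs_norm u, ← abs_mul, abs_norm, sub_mul, inv_mul_cancel₀ hu', one_mul,
    abs_sub_comm]

namespace IsAbsoluteNorm

variable {N : ℝ → ℝ → ℝ}

lemma apply_zero_right (hN : IsAbsoluteNorm N) (s : ℝ) : N s 0 = |s| := by
  simpa [hN.one_zero] using hN.smul s 1 0

lemma apply_zero_left (hN : IsAbsoluteNorm N) (t : ℝ) : N 0 t = |t| := by
  simpa [hN.zero_one] using hN.smul t 0 1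

lemma apply_neg_right (hN : IsAbsoluteNorm N) (s t : ℝ) : N s (-t) = N s t := by
  rw [hN.abs_eq, abs_neg, ← hN.abs_eq]

lemma apply_neg_left (hN : IsAbsoluteNorm N) (s t : ℝ) : N (-s) t = N s t := by
  rw [hN.abs_eq, abs_neg, ← hN.abs_eq]

lemma abs_left_le (hN : IsAbsoluteNorm N) (s t : ℝ) : |s| ≤ N s t := by
  have := hN.triangle s t s (-t)
  rw [add_neg_cancel, hN.apply_zero_right, hN.apply_neg_right, ← two_mul, abs_mul, abs_two] at this
  linarith

lemma abs_right_le (hN : IsAbsoluteNorm N) (s t : ℝ) : |t| ≤ N s t := by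
  have := hN.triangle s t (-s) t
  rw [add_neg_cancel, hN.apply_zero_left, hN.apply_neg_left, ← two_mul, abs_mul, abs_two] at this
  linarith

lemma mono_right (hN : IsAbsoluteNorm N) (s : ℝ) {t t' : ℝ} (ht : 0 ≤ t) (htt' : t ≤ t') :
    N s t ≤ N s t' := by
  obtain rfl | ht' := (ht.trans htt').eq_or_lt
  · rw [le_antisymm htt' ht]
  -- `(s, t)` is a convex combination of `(s, t')` and `(s, -t')`.
  set a := (t' + t) / (2 * t') with ha_def
  set b := (t' - t) / (2 * t') with hb_def
  have ha : 0 ≤ a := by positivity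
  have hb : 0 ≤ b := div_nonneg (by linarith) (by positivity)
  have hab : a + b = 1 := by rw [ha_def, hb_def]; field_simp; ring
  have hsub : a * t' + b * -t' = t := by rw [ha_def, hb_def]; field_simp; ring
  calc N s t = N (a * s + b * s) (a * t' + b * -t') := by rw [← add_mul, hab, one_mul, hsub]
    _ ≤ N (a * s) (a * t') + N (b * s) (b * -t') := hN.triangle _ _ _ _
    _ = (a + b) * N s t' := by
        rw [hN.smul, hN.smul, hN.apply_neg_right, abs_of_nonneg ha, abs_of_nonneg hb, add_mul]
    _ = N s t' := by rw [hab, one_mul]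

end IsAbsoluteNorm

namespace ContinuousLinearMap

variable {E F G : Type*} [NormedAddCommGroup E] [NormedSpace ℝ E] [NormedAddCommGroup F]
  [NormedSpace ℝ F] [NormedAddCommGroup G] [NormedSpace ℝ G]

lemma opNorm_comp_le_of_norm_right_le_one (h : F →L[ℝ] G) {f : E →L[ℝ] F} (hf : ‖f‖ ≤ 1) :
    ‖h ∘L f‖ ≤ ‖h‖ :=
  (opNorm_comp_le h f).trans (mul_le_of_le_one_right (norm_nonneg h) hf)

lemma opNorm_comp_le_of_norm_left_le_one {h : F →L[ℝ] G} (f : E →L[ℝ] F) (hh : ‖h‖ ≤ 1) :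
    ‖h ∘L f‖ ≤ ‖f‖ :=
  (opNorm_comp_le h f).trans (mul_le_of_le_one_left (norm_nonneg f) hh)

end ContinuousLinearMap

section AbsoluteSum

variable {X X₁ X₂ Y : Type*} [NormedAddCommGroup X] [NormedSpace ℝ X]
  [NormedAddCommGroup X₁] [NormedSpace ℝ X₁] [NormedAddCommGroup X₂] [NormedSpace ℝ X₂]
  [NormedAddCommGroup Y] [NormedSpace ℝ Y]
  {N : ℝ → ℝ → ℝ} {e : X ≃L[ℝ] X₁ × X₂}

open ContinuousLinearMap

def summandInl (e : X ≃L[ℝ] X₁ × X₂) : X₁ →L[ℝ] X :=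
  (e.symm : X₁ × X₂ →L[ℝ] X) ∘L inl ℝ X₁ X₂

def summandInr (e : X ≃L[ℝ] X₁ × X₂) : X₂ →L[ℝ] X :=
  (e.symm : X₁ × X₂ →L[ℝ] X) ∘L inr ℝ X₁ X₂

def summandFst (e : X ≃L[ℝ] X₁ × X₂) : X →L[ℝ] X₁ :=
  fst ℝ X₁ X₂ ∘L (e : X →L[ℝ] X₁ × X₂)

@[simp]
lemma summandInl_apply (x : X₁) : summandInl e x = e.symm (x, 0) := rfl

@[simp]
lemma summandInr_apply (y : X₂) : summandInr e y = e.symm (0, y) := rfl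

@[simp]
lemma summandFst_apply (x : X) : summandFst e x = (e x).1 := rfl

variable (he : ∀ x : X, ‖x‖ = N ‖(e x).1‖ ‖(e x).2‖)
include he

lemma norm_symm_apply (p : X₁ × X₂) : ‖e.symm p‖ = N ‖p.1‖ ‖p.2‖ := by
  rw [he, e.apply_symm_apply]

variable (hN : IsAbsoluteNorm N)
include hN

lemma norm_summandInl_apply (x : X₁) : ‖summandInl e x‖ = ‖x‖ := by
  rw [summandInl_apply, norm_symm_apply he, norm_zero, hN.apply_zero_right, abs_norm]

lemma norm_summandInr_le : ‖summandInr e‖ ≤ 1 :=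
  opNorm_le_bound _ zero_le_one fun y => by
    rw [summandInr_apply, norm_symm_apply he, norm_zero, hN.apply_zero_left, abs_norm, one_mul]

lemma norm_summandInl_le : ‖summandInl e‖ ≤ 1 :=
  opNorm_le_bound _ zero_le_one fun x => by rw [norm_summandInl_apply he hN, one_mul]

lemma norm_fst_apply_le (x : X) : ‖(e x).1‖ ≤ ‖x‖ := by
  simpa [← he] using hN.abs_left_le ‖(e x).1‖ ‖(e x).2‖

lemma norm_snd_apply_le (x : X) : ‖(e x).2‖ ≤ ‖x‖ := by
  simpa [← he] using hN.abs_right_le ‖(e x).1‖ ‖(e x).2‖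

lemma norm_fst_sub_le_norm_sub_summandInl (w : X) (x : X₁) :
    ‖(e w).1 - x‖ ≤ ‖w - summandInl e x‖ := by
  simpa using norm_fst_apply_le he hN (w - summandInl e x)

lemma norm_snd_le_norm_sub_summandInl (w : X) (x : X₁) : ‖(e w).2‖ ≤ ‖w - summandInl e x‖ := by
  simpa using norm_snd_apply_le he hN (w - summandInl e x)

lemma norm_comp_summandFst (T : X₁ →L[ℝ] Y) : ‖T ∘L summandFst e‖ = ‖T‖ := by
  refine le_antisymm ?_ ?_
  · exact opNorm_comp_le_of_norm_right_le_one T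
      (opNorm_le_bound _ zero_le_one fun x => by simpa using norm_fst_apply_le he hN x)
  · calc ‖T‖ = ‖(T ∘L summandFst e) ∘L summandInl e‖ := by congr 1; ext; simp
      _ ≤ ‖T ∘L summandFst e‖ := opNorm_comp_le_of_norm_right_le_one _ (norm_summandInl_le he hN)

lemma norm_comp_summandInl_sub_le (S : X →L[ℝ] Y) (T : X₁ →L[ℝ] Y) :
    ‖S ∘L summandInl e - T‖ ≤ ‖S - T ∘L summandFst e‖ := by
  calc ‖S ∘L summandInl e - T‖ = ‖(S - T ∘L summandFst e) ∘L summandInl e‖ := by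
        congr 1; ext; simp
    _ ≤ ‖S - T ∘L summandFst e‖ := opNorm_comp_le_of_norm_right_le_one _ (norm_summandInl_le he hN)

lemma norm_mul_norm_symm_le {g : X₁ →L[ℝ] ℝ} {u₁ : X₁} (u₂ : X₂) (hg : ‖u₁‖ * ‖g‖ ≤ 1)
    (x : X₁) : ‖u₁‖ * ‖e.symm (x, g x • u₂)‖ ≤ ‖x‖ * ‖e.symm (u₁, u₂)‖ := by
  rw [norm_symm_apply he, norm_symm_apply he, norm_smul, Real.norm_eq_abs]
  have hgx : ‖u₁‖ * |g x| ≤ ‖x‖ := by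
    calc ‖u₁‖ * |g x| ≤ ‖u₁‖ * (‖g‖ * ‖x‖) := by
          gcongr; rw [← Real.norm_eq_abs]; exact g.le_opNorm x
      _ ≤ ‖x‖ := by rw [← mul_assoc]; exact mul_le_of_le_one_left (norm_nonneg x) hg
  calc ‖u₁‖ * N ‖x‖ (|g x| * ‖u₂‖) = N (‖x‖ * ‖u₁‖) (‖u₁‖ * |g x| * ‖u₂‖) := by
        rw [← abs_norm u₁, ← hN.smul, abs_norm, mul_comm ‖u₁‖ ‖x‖, mul_assoc]
    _ ≤ N (‖x‖ * ‖u₁‖) (‖x‖ * ‖u₂‖) := hN.mono_right _ (by positivity) (by gcongr)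
    _ = ‖x‖ * N ‖u₁‖ ‖u₂‖ := by rw [hN.smul, abs_norm]

lemma exists_norm_attaining_near_comp_summandInl {S : X →L[ℝ] Y} (hS : ‖S‖ ≤ 1) {w : X}
    (hw : ‖w‖ = 1) (hSw : ‖S w‖ = 1) (hw₁ : (e w).1 ≠ 0) :
    ∃ S₁ : X₁ →L[ℝ] Y, ‖S₁‖ = 1 ∧ ‖S₁ (‖(e w).1‖⁻¹ • (e w).1)‖ = 1 ∧
      ‖S₁ - S ∘L summandInl e‖ ≤ |‖(e w).1‖ - 1| + ‖(e w).2‖ := by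
  set u₁ := (e w).1
  set u₂ := (e w).2
  have hu₁ : 0 < ‖u₁‖ := norm_pos_iff.2 hw₁
  obtain ⟨g, hg, hgu₁⟩ := exists_dual_vector'' ℝ u₁
  set g' := ‖u₁‖⁻¹ • g
  have hg' : ‖u₁‖ * ‖g'‖ ≤ 1 := by
    rw [norm_smul, norm_inv, norm_norm, ← mul_assoc, mul_inv_cancel₀ hu₁.ne', one_mul]
    exact hg
  have hg'u₁ : g' u₁ = 1 := by simp [g', hgu₁, hu₁.ne']
  -- `A` tilts the inclusion of `X₁` so that it sends `u₁` to `w`.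
  set A := summandInl e + summandInr e ∘L g'.smulRight u₂
  have hA : ∀ x, A x = e.symm (x, g' x • u₂) := fun x => by
    simp only [A, add_apply, comp_apply, smulRight_apply, summandInl_apply, summandInr_apply,
      ← map_add, Prod.mk_add_mk, add_zero, zero_add]
  have hAu₁ : A u₁ = w := by rw [hA, hg'u₁, one_smul, Prod.mk.eta, e.symm_apply_apply]
  set S₁ := ‖u₁‖ • S ∘L A
  have hS₁ : ‖S₁‖ ≤ 1 := opNorm_le_bound _ zero_le_one fun x => by
    calc ‖S₁ x‖ = ‖u₁‖ * ‖S (A x)‖ := by simp [S₁, norm_smul]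
      _ ≤ ‖u₁‖ * ‖A x‖ := by gcongr; exact S.le_of_opNorm_le hS _ |>.trans_eq (one_mul _)
      _ ≤ 1 * ‖x‖ := by
          have := norm_mul_norm_symm_le he hN u₂ hg' x
          rwa [Prod.mk.eta, e.symm_apply_apply, hw, mul_one, ← hA, ← one_mul ‖x‖] at this
  have hS₁x₁ : S₁ (‖u₁‖⁻¹ • u₁) = S w := by
    simp [S₁, smul_smul, inv_mul_cancel₀ hu₁.ne', hAu₁]
  refine ⟨S₁, le_antisymm hS₁ ?_, hS₁x₁ ▸ hSw, ?_⟩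
  · rw [← hSw, ← hS₁x₁]
    exact S₁.unit_le_opNorm _ (norm_smul_inv_norm hw₁).le
  · have hSk : ‖S ∘L summandInr e ∘L g'.smulRight u₂‖ ≤ ‖g'‖ * ‖u₂‖ :=
      (opNorm_comp_le_of_norm_left_le_one _ hS).trans <|
        (opNorm_comp_le_of_norm_left_le_one _ (norm_summandInr_le he hN)).trans_eq
          (norm_smulRight_apply g' u₂)
    have hSj : ‖S ∘L summandInl e‖ ≤ 1 :=
      (opNorm_comp_le_of_norm_left_le_one _ hS).trans (norm_summandInl_le he hN)
    calc ‖S₁ - S ∘L summandInl e‖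
        = ‖‖u₁‖ • (S ∘L summandInr e ∘L g'.smulRight u₂) + (‖u₁‖ - 1) • S ∘L summandInl e‖ := by
          congr 1; simp only [S₁, A, comp_add]; module
      _ ≤ ‖u₁‖ * (‖g'‖ * ‖u₂‖) + |‖u₁‖ - 1| * 1 := by
          refine (norm_add_le _ _).trans (add_le_add ?_ ?_) <;>
            rw [norm_smul, Real.norm_eq_abs] <;> gcongr
          rw [abs_norm]
      _ ≤ |‖u₁‖ - 1| + ‖u₂‖ := by nlinarith [norm_nonneg u₂]

end AbsoluteSum

theorem bpbp_absolute_summand_domain_general (X X₁ X₂ Y : Type*)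
    [NormedAddCommGroup X] [NormedSpace ℝ X]
    [NormedAddCommGroup X₁] [NormedSpace ℝ X₁]
    [NormedAddCommGroup X₂] [NormedSpace ℝ X₂]
    [NormedAddCommGroup Y] [NormedSpace ℝ Y]
    (N : ℝ → ℝ → ℝ) (hN : IsAbsoluteNorm N)
    (e : X ≃L[ℝ] X₁ × X₂) (he : ∀ x : X, ‖x‖ = N ‖(e x).1‖ ‖(e x).2‖)
    (h : HasBPBp X Y) : HasBPBp X₁ Y := by
  intro ε hε
  set δ := min (ε / 3) 1
  have hδε : δ ≤ ε / 3 := min_le_left _ _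
  obtain ⟨η, hη, hBP⟩ := h δ (by positivity)
  refine ⟨η, hη, fun T x₀ hT hx₀ hTx₀ => ?_⟩
  obtain ⟨S, w, hS, hw, hSw, hwx₀, hST⟩ := hBP (T ∘L summandFst e) (summandInl e x₀)
    (by rw [norm_comp_summandFst he hN, hT]) (by rw [norm_summandInl_apply he hN, hx₀])
    (by simpa using hTx₀)
  have h₁ : ‖(e w).1 - x₀‖ < δ := (norm_fst_sub_le_norm_sub_summandInl he hN w x₀).trans_lt hwx₀
  have h₂ : ‖(e w).2‖ < δ := (norm_snd_le_norm_sub_summandInl he hN w x₀).trans_lt hwx₀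
  have h₃ : |‖(e w).1‖ - 1| < δ := hx₀ ▸ (abs_norm_sub_norm_le _ _).trans_lt h₁
  have hw₁ : (e w).1 ≠ 0 :=
    norm_pos_iff.1 (by linarith [(abs_lt.1 h₃).1, min_le_right (ε / 3) 1])
  obtain ⟨S₁, hS₁, hS₁x₁, hS₁S⟩ :=
    exists_norm_attaining_near_comp_summandInl he hN hS.le hw hSw hw₁
  refine ⟨S₁, _, hS₁, norm_smul_inv_norm hw₁, hS₁x₁, ?_, ?_⟩
  · calc _ ≤ ‖‖(e w).1‖⁻¹ • (e w).1 - (e w).1‖ + ‖(e w).1 - x₀‖ :=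
          norm_sub_le_norm_sub_add_norm_sub _ _ _
      _ < ε := by rw [norm_inv_norm_smul_sub_self hw₁]; linarith
  · calc ‖S₁ - T‖ ≤ ‖S₁ - S ∘L summandInl e‖ + ‖S ∘L summandInl e - T‖ :=
          norm_sub_le_norm_sub_add_norm_sub _ _ _
      _ < ε := by linarith [norm_comp_summandInl_sub_le he hN S T]

theorem bpbp_absolute_summand_domain (X X₁ X₂ Y : Type*)
    [NormedAddCommGroup X] [NormedSpace ℝ X] [CompleteSpace X]
    [NormedAddCommGroup X₁] [NormedSpace ℝ X₁] [CompleteSpace X₁]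
    [NormedAddCommGroup X₂] [NormedSpace ℝ X₂] [CompleteSpace X₂]
    [NormedAddCommGroup Y] [NormedSpace ℝ Y] [CompleteSpace Y]
    (N : ℝ → ℝ → ℝ) (hN : IsAbsoluteNorm N)
    (e : X ≃L[ℝ] X₁ × X₂) (he : ∀ x : X, ‖x‖ = N ‖(e x).1‖ ‖(e x).2‖)
    (htype : AbsNormTypeOne N ∨ AbsNormTypeInfty N)
    (h : HasBPBp X Y) : HasBPBp X₁ Y :=
  bpbp_absolute_summand_domain_general X X₁ X₂ Y N hN e he h
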